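/- Let G be a finite simple graph on n vertices and k > 2 an integer. Construct G' with vertex set V(G) × {1,...,k}, where for i,j distinct and both different from k, (u,i) is adjacent to (v,j) if and only if u and v are adjacent in G, and (v,k) is adjacent exactly to (v,i) for all i ≠ k. Then α(G') = n + (k−2)·α(G). -/

import Mathlib

/-!
Split an independent set `s` of the layered graph into the sets `layersAt s v ⊆ Fin k` of layers
in which the copies of each vertex `v` lie. The copy of `v` in the last layer is adjacent to all
other copies of `v`, so a vertex with two or more copies in `s` has at most `k - 1` of them, all
outside the last layer; and these vertices are independent in `G`, since two adjacent ones would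
have copies in distinct non-last layers. Hence `#s ≤ n + (k - 2) α(G)`. Conversely, a maximum
independent set `I` of `G` copied to every non-last layer, together with the copy of `V \ I` in
the last layer, is independent of exactly that size.
-/

open Finset

/-- The maximum size of an independent set of `G`. -/
noncomputable def indepNum {V : Type*} [Fintype V] (G : SimpleGraph V) : ℕ :=
  sSup {n | ∃ s : Finset V, (∀ u ∈ s, ∀ w ∈ s, ¬ G.Adj u w) ∧ s.card = n}

/-- The `k`-layered graph `G'` built from `G`: vertices are `V × Fin k`; each class
`V × {i}` is independent; for `i ≠ j` both different from the last class, `(u,i)` is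
adjacent to `(v,j)` iff `u ~ v` in `G`; the last class is joined to each other class by
a perfect matching on the copies of each vertex. -/
def layered {V : Type*} (G : SimpleGraph V) (k : ℕ) : SimpleGraph (V × Fin k) where
  Adj a b := a.2 ≠ b.2 ∧
    ((a.2.val < k - 1 ∧ b.2.val < k - 1 ∧ G.Adj a.1 b.1) ∨
     ((a.2.val = k - 1 ∨ b.2.val = k - 1) ∧ a.1 = b.1))
  symm := ⟨by
    rintro ⟨u, i⟩ ⟨v, j⟩ ⟨hne, h⟩
    refine ⟨hne.symm, ?_⟩
    rcases h with ⟨hi, hj, hadj⟩ | ⟨hij, huv⟩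
    · exact Or.inl ⟨hj, hi, hadj.symm⟩
    · exact Or.inr ⟨hij.symm, huv.symm⟩⟩
  loopless := ⟨by rintro ⟨u, i⟩ ⟨h, _⟩; exact h rfl⟩

lemma indepNum_eq_indepNum {V : Type*} [Fintype V] (G : SimpleGraph V) :
    indepNum G = G.indepNum := by
  simp only [indepNum, SimpleGraph.indepNum, SimpleGraph.isNIndepSet_iff,
    SimpleGraph.isIndepSet_iff, Set.Pairwise, Finset.mem_coe]
  congr! 3 with n
  refine exists_congr fun s => and_congr_left fun _ => ?_
  exact ⟨fun h u hu w hw _ => h u hu w hw, fun h u hu w hw huw => h hu hw (G.ne_of_adj huw) huw⟩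

section LayersAt

variable {α β : Type*} [Fintype β] [DecidableEq α] [DecidableEq β]

def layersAt (s : Finset (α × β)) (a : α) : Finset β := {b | (a, b) ∈ s}

@[simp] lemma mem_layersAt {s : Finset (α × β)} {a : α} {b : β} :
    b ∈ layersAt s a ↔ (a, b) ∈ s := by
  simp [layersAt]

lemma card_eq_sum_card_layersAt [Fintype α] (s : Finset (α × β)) :
    #s = ∑ a, #(layersAt s a) := by
  rw [← filter_univ_mem s, card_filter, Fintype.sum_prod_type]
  simp only [layersAt, card_filter, filter_univ_mem]

end LayersAt

lemma sum_one_add_ite_mem {V : Type*} [Fintype V] [DecidableEq V] (W : Finset V) (m : ℕ) :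
    ∑ v, (1 + if v ∈ W then m else 0) = Fintype.card V + m * #W := by
  simp [sum_add_distrib, sum_ite_mem, mul_comm]

lemma layered_adj_iff {V : Type*} {G : SimpleGraph V} {n : ℕ} {a b : V × Fin (n + 1)} :
    (layered G (n + 1)).Adj a b ↔ a.2 ≠ b.2 ∧
      ((a.2 ≠ Fin.last n ∧ b.2 ≠ Fin.last n ∧ G.Adj a.1 b.1) ∨
        ((a.2 = Fin.last n ∨ b.2 = Fin.last n) ∧ a.1 = b.1)) := by
  simp only [layered, add_tsub_cancel_right, ← Fin.lt_last_iff_ne_last, Fin.lt_def,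
    Fin.val_last, Fin.ext_iff]

section Layered

variable {V : Type*} [DecidableEq V] {G : SimpleGraph V} {m : ℕ}
  {s : Finset (V × Fin (m + 2))}

lemma last_notMem_layersAt (hs : (layered G (m + 2)).IsIndepSet s) {v : V}
    (h : 1 < #(layersAt s v)) : Fin.last (m + 1) ∉ layersAt s v := by
  intro hlast
  obtain ⟨i, hi, hne⟩ := (one_lt_card_iff_nontrivial.1 h).exists_ne (Fin.last (m + 1))
  exact hs (mem_layersAt.1 hi) (mem_layersAt.1 hlast) (by simpa)
    (layered_adj_iff.2 ⟨hne, Or.inr ⟨Or.inr rfl, rfl⟩⟩)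

variable [Fintype V]

lemma card_layersAt_le (hs : (layered G (m + 2)).IsIndepSet s) (v : V) :
    #(layersAt s v) ≤ 1 + if v ∈ ({v | 1 < #(layersAt s v)} : Finset V) then m else 0 := by
  by_cases h : 1 < #(layersAt s v)
  · have hsub : layersAt s v ⊆ univ.erase (Fin.last (m + 1)) := fun i hi =>
      mem_erase.2 ⟨ne_of_mem_of_not_mem hi (last_notMem_layersAt hs h), mem_univ i⟩
    have := card_le_card hsub
    simp only [card_erase_of_mem (mem_univ _), card_univ, Fintype.card_fin] at this
    simp only [mem_filter, mem_univ, true_and, h, if_true]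
    omega
  · simp only [mem_filter, mem_univ, true_and, h, if_false]
    omega

lemma isIndepSet_filter_one_lt_card_layersAt (hs : (layered G (m + 2)).IsIndepSet s) :
    G.IsIndepSet ({v | 1 < #(layersAt s v)} : Finset V) := by
  intro u hu w hw huw hadj
  simp only [mem_coe, mem_filter, mem_univ, true_and] at hu hw
  obtain ⟨j, hj⟩ := card_pos.1 (by omega : 0 < #(layersAt s w))
  obtain ⟨i, hi, hij⟩ := (one_lt_card_iff_nontrivial.1 hu).exists_ne j
  exact hs (mem_layersAt.1 hi) (mem_layersAt.1 hj) (by simp [huw])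
    (layered_adj_iff.2 ⟨hij, Or.inl ⟨ne_of_mem_of_not_mem hi (last_notMem_layersAt hs hu),
      ne_of_mem_of_not_mem hj (last_notMem_layersAt hs hw), hadj⟩⟩)

theorem card_le_of_isIndepSet_layered (hs : (layered G (m + 2)).IsIndepSet s) :
    #s ≤ Fintype.card V + m * G.indepNum :=
  calc #s = ∑ v, #(layersAt s v) := card_eq_sum_card_layersAt s
    _ ≤ ∑ v, (1 + if v ∈ ({v | 1 < #(layersAt s v)} : Finset V) then m else 0) :=
      sum_le_sum fun v _ => card_layersAt_le hs v
    _ = Fintype.card V + m * #({v | 1 < #(layersAt s v)} : Finset V) := sum_one_add_ite_mem _ _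
    _ ≤ Fintype.card V + m * G.indepNum := by
      gcongr
      exact (isIndepSet_filter_one_lt_card_layersAt hs).card_le_indepNum

theorem exists_isIndepSet_layered_card {I : Finset V} (hI : G.IsIndepSet I) :
    ∃ s : Finset (V × Fin (m + 2)),
      (layered G (m + 2)).IsIndepSet s ∧ #s = Fintype.card V + m * #I := by
  refine ⟨({a | a.1 ∈ I ↔ a.2 ≠ Fin.last (m + 1)} : Finset (V × Fin (m + 2))), ?_, ?_⟩
  · rintro ⟨u, i⟩ hu ⟨w, j⟩ hw - hadj
    simp only [mem_coe, mem_filter, mem_univ, true_and] at hu hw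
    rcases layered_adj_iff.1 hadj with ⟨hij, ⟨hi, hj, hG⟩ | ⟨hlast, rfl⟩⟩
    · exact hI (hu.2 hi) (hw.2 hj) (G.ne_of_adj hG) hG
    · grind
  · rw [card_eq_sum_card_layersAt, ← sum_one_add_ite_mem]
    refine sum_congr rfl fun v _ => ?_
    by_cases hv : v ∈ I <;> simp [layersAt, hv, filter_ne', filter_eq', add_comm]

end Layered

/-- For `k > 2`, `α(G') = n + (k-2)·α(G)` where `G'` is the `k`-layered graph of `G`. -/
theorem indepNum_layered {V : Type*} [Fintype V] [DecidableEq V]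
    (G : SimpleGraph V) (k : ℕ) (hk : 2 < k) :
    indepNum (layered G k) = Fintype.card V + (k - 2) * indepNum G := by
  obtain ⟨m, rfl⟩ : ∃ m, k = m + 2 := ⟨k - 2, by omega⟩
  rw [indepNum_eq_indepNum, indepNum_eq_indepNum, Nat.add_sub_cancel]
  apply le_antisymm
  · obtain ⟨s, hs⟩ := (layered G (m + 2)).exists_isNIndepSet_indepNum
    exact hs.card_eq ▸ card_le_of_isIndepSet_layered hs.isIndepSet
  · obtain ⟨I, hI⟩ := G.exists_isNIndepSet_indepNum
    obtain ⟨s, hs, hcard⟩ := exists_isIndepSet_layered_card (m := m) hI.isIndepSet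
    rw [← hI.card_eq, ← hcard]
    exact hs.card_le_indepNum
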